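/- In the Heisenberg group H_3(ℝ) with the subFinsler metric d_3 induced by the ℓ¹ norm on the horizontal plane, if max{|x|,|y|}² − |xy|/2 ≤ |z|, then d_3(id,(x,y,z)) = 4·√(|z| + |xy|/2) − |x| − |y|. -/

import Mathlib

/-- The subFinsler (Carnot–Carathéodory) distance from the identity in the
Heisenberg group `H₃(ℝ)`, in exponential coordinates `(x,y,z)` with `[X,Y] = Z`,
associated to the ℓ¹ norm `|a| + |b|` on horizontal vectors `aX + bY`.
A horizontal path is encoded by coordinate functions `x y z : ℝ → ℝ` with
controls `u v` (the horizontal velocities), the constraint on `z` being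
`z' = (x v - y u)/2`, and its length is `∫ (|u| + |v|)`. -/
noncomputable def d3 : ℝ × ℝ × ℝ → ℝ := fun p =>
  sInf { L : ℝ | ∃ x y z u v : ℝ → ℝ,
    x 0 = 0 ∧ y 0 = 0 ∧ z 0 = 0 ∧
    x 1 = p.1 ∧ y 1 = p.2.1 ∧ z 1 = p.2.2 ∧
    ContinuousOn u (Set.Icc 0 1) ∧ ContinuousOn v (Set.Icc 0 1) ∧
    (∀ t ∈ Set.Icc (0:ℝ) 1, HasDerivAt x (u t) t ∧ HasDerivAt y (v t) t ∧
        HasDerivAt z ((x t * v t - y t * u t) / 2) t) ∧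
    L = ∫ t in (0:ℝ)..1, (|u t| + |v t|) }

/-- Group law of `H₃(ℝ)` in exponential coordinates:
`(x,y,z)·(x',y',z') = (x+x', y+y', z+z'+(xy'-yx')/2)`. -/
noncomputable def hMul (p q : ℝ × ℝ × ℝ) : ℝ × ℝ × ℝ :=
  (p.1 + q.1, p.2.1 + q.2.1, p.2.2 + q.2.2 + (p.1 * q.2.1 - p.2.1 * q.1) / 2)

/-- Inverse in `H₃(ℝ)` in exponential coordinates. -/
noncomputable def hInv (p : ℝ × ℝ × ℝ) : ℝ × ℝ × ℝ := (-p.1, -p.2.1, -p.2.2)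

/-- The left-invariant subFinsler distance `d₃` on `H₃(ℝ)`. -/
noncomputable def d3dist (p q : ℝ × ℝ × ℝ) : ℝ := d3 (hMul (hInv p) q)

/-!
Upper bound: with `s = √(|z| + |xy|/2)`, the loop of four horizontal segments of lengths
`s - |y|, s, s, s - |x|`, traversed in the orientation given by the sign of `z`, ends at
`(x, y, z)`; the region condition says exactly that `|x|, |y| ≤ s`.

Lower bound: along a horizontal path with `X = ∫|u|` and `Y = ∫|v|`, the coordinate `x` stays
within `r = (X + |x(1)|)/4` of some centre `c`. Both `z(1) ± x(1)y(1)/2` are areas `∫ (x - e) v`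
with `e` an endpoint value of `x`, hence bounded by `r (Y + |y(1)|)`, and AM–GM gives
`|z| + |xy|/2 ≤ ((L + |x| + |y|)/4)²`.
-/

open Set MeasureTheory intervalIntegral

def horizontalLengths (p : ℝ × ℝ × ℝ) : Set ℝ :=
  { L : ℝ | ∃ x y z u v : ℝ → ℝ,
    x 0 = 0 ∧ y 0 = 0 ∧ z 0 = 0 ∧
    x 1 = p.1 ∧ y 1 = p.2.1 ∧ z 1 = p.2.2 ∧
    ContinuousOn u (Set.Icc 0 1) ∧ ContinuousOn v (Set.Icc 0 1) ∧
    (∀ t ∈ Set.Icc (0:ℝ) 1, HasDerivAt x (u t) t ∧ HasDerivAt y (v t) t ∧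
        HasDerivAt z ((x t * v t - y t * u t) / 2) t) ∧
    L = ∫ t in (0:ℝ)..1, (|u t| + |v t|) }

theorem d3_eq_sInf_horizontalLengths (p : ℝ × ℝ × ℝ) : d3 p = sInf (horizontalLengths p) := rfl

theorem abs_add_abs_le_of_abs_add_le_of_abs_sub_le {a b B : ℝ} (h₁ : |a + b| ≤ B)
    (h₂ : |a - b| ≤ B) : |a| + |b| ≤ B := by
  rw [abs_le] at h₁ h₂
  cases abs_cases a <;> cases abs_cases b <;> linarith

section Variation

variable {f f' : ℝ → ℝ} {a b : ℝ}

theorem abs_sub_le_integral_abs_deriv (hab : a ≤ b) (hf : ∀ t ∈ Icc a b, HasDerivAt f (f' t) t)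
    (hf' : ContinuousOn f' (Icc a b)) : |f b - f a| ≤ ∫ t in a..b, |f' t| := by
  rw [← integral_eq_sub_of_hasDerivAt (fun t ht => hf t (uIcc_of_le hab ▸ ht))
    (hf'.intervalIntegrable_of_Icc hab)]
  exact abs_integral_le_integral_abs hab

theorem abs_sub_add_abs_sub_add_abs_sub_le_integral_abs_deriv {s t : ℝ} (has : a ≤ s)
    (hst : s ≤ t) (htb : t ≤ b) (hf : ∀ t ∈ Icc a b, HasDerivAt f (f' t) t)
    (hf' : ContinuousOn f' (Icc a b)) :
    |f s - f a| + |f t - f s| + |f b - f t| ≤ ∫ r in a..b, |f' r| := by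
  have piece {p q : ℝ} (hap : a ≤ p) (hpq : p ≤ q) (hqb : q ≤ b) :
      |f q - f p| ≤ ∫ r in p..q, |f' r| ∧ IntervalIntegrable (fun r => |f' r|) volume p q :=
    have hsub := Icc_subset_Icc hap hqb
    ⟨abs_sub_le_integral_abs_deriv hpq (fun r hr => hf r (hsub hr)) (hf'.mono hsub),
      (hf'.mono hsub).abs.intervalIntegrable_of_Icc hpq⟩
  obtain ⟨h₁, i₁⟩ := piece le_rfl has (hst.trans htb)
  obtain ⟨h₂, i₂⟩ := piece has hst htb
  obtain ⟨h₃, i₃⟩ := piece (has.trans hst) htb le_rfl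
  rw [← integral_add_adjacent_intervals (i₁.trans i₂) i₃, ← integral_add_adjacent_intervals i₁ i₂]
  linarith

theorem two_mul_sub_le_integral_abs_deriv_add {s t : ℝ} (hs : s ∈ Icc a b) (ht : t ∈ Icc a b)
    (hf : ∀ t ∈ Icc a b, HasDerivAt f (f' t) t) (hf' : ContinuousOn f' (Icc a b)) :
    2 * (f s - f t) ≤ (∫ r in a..b, |f' r|) + |f b - f a| := by
  have h := abs_sub_le_integral_abs_deriv (hs.1.trans hs.2) hf hf'
  rcases le_total s t with hst | hts
  · have := abs_sub_add_abs_sub_add_abs_sub_le_integral_abs_deriv hs.1 hst ht.2 hf hf'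
    linarith [le_abs_self (f s - f a), neg_abs_le (f t - f s), le_abs_self (f b - f t),
      le_abs_self (f b - f a), neg_abs_le (f b - f a)]
  · have := abs_sub_add_abs_sub_add_abs_sub_le_integral_abs_deriv ht.1 hts hs.2 hf hf'
    linarith [neg_abs_le (f t - f a), le_abs_self (f s - f t), neg_abs_le (f b - f s),
      le_abs_self (f b - f a), neg_abs_le (f b - f a)]

theorem exists_forall_abs_sub_le_integral_abs_deriv (hab : a ≤ b)
    (hf : ∀ t ∈ Icc a b, HasDerivAt f (f' t) t) (hf' : ContinuousOn f' (Icc a b)) :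
    ∃ c, ∀ t ∈ Icc a b, |f t - c| ≤ ((∫ r in a..b, |f' r|) + |f b - f a|) / 4 := by
  have hfc : ContinuousOn f (Icc a b) := fun t ht => (hf t ht).continuousAt.continuousWithinAt
  obtain ⟨tM, htM, hM⟩ := isCompact_Icc.exists_isMaxOn (nonempty_Icc.mpr hab) hfc
  obtain ⟨tm, htm, hm⟩ := isCompact_Icc.exists_isMinOn (nonempty_Icc.mpr hab) hfc
  have hosc := two_mul_sub_le_integral_abs_deriv_add htM htm hf hf'
  refine ⟨(f tM + f tm) / 2, fun t ht => abs_le.mpr ⟨?_, ?_⟩⟩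
  · linarith [isMinOn_iff.mp hm t ht]
  · linarith [isMaxOn_iff.mp hM t ht]

end Variation

theorem abs_integral_sub_mul_le {g v : ℝ → ℝ} {a b c e r : ℝ} (hab : a ≤ b)
    (hg : ContinuousOn g (Icc a b)) (hv : ContinuousOn v (Icc a b))
    (hgc : ∀ t ∈ Icc a b, |g t - c| ≤ r) (hce : |c - e| ≤ r) :
    |∫ t in a..b, (g t - e) * v t| ≤ r * ((∫ t in a..b, |v t|) + |∫ t in a..b, v t|) := by
  have hgcv : IntervalIntegrable (fun t => (g t - c) * v t) volume a b :=
    ((hg.sub continuousOn_const).mul hv).intervalIntegrable_of_Icc hab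
  have hsplit : ∫ t in a..b, (g t - e) * v t
      = (∫ t in a..b, (g t - c) * v t) + (c - e) * ∫ t in a..b, v t := by
    rw [← intervalIntegral.integral_const_mul,
      ← integral_add hgcv ((hv.intervalIntegrable_of_Icc hab).const_mul _)]
    congr 1 with t
    ring
  have hmain : |∫ t in a..b, (g t - c) * v t| ≤ r * ∫ t in a..b, |v t| := by
    rw [← intervalIntegral.integral_const_mul]
    refine (abs_integral_le_integral_abs hab).trans (integral_mono_on hab
      (((hg.sub continuousOn_const).mul hv).abs.intervalIntegrable_of_Icc hab)
      ((hv.abs.intervalIntegrable_of_Icc hab).const_mul _) fun t ht => ?_)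
    rw [abs_mul]
    exact mul_le_mul_of_nonneg_right (hgc t ht) (abs_nonneg _)
  rw [hsplit]
  calc _ ≤ |∫ t in a..b, (g t - c) * v t| + |c - e| * |∫ t in a..b, v t| :=
        (abs_add_le _ _).trans_eq (by rw [abs_mul])
    _ ≤ _ := by nlinarith [abs_nonneg (∫ t in a..b, v t)]

section Horizontal

variable {x y z u v : ℝ → ℝ}

/-- `z + x y / 2 - e y` is a primitive of `(x - e) v` along a horizontal path. -/
theorem integral_sub_mul_eq_of_horizontal {a b : ℝ} (hab : a ≤ b) (e : ℝ)
    (hv : ContinuousOn v (Icc a b))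
    (hder : ∀ t ∈ Icc a b, HasDerivAt x (u t) t ∧ HasDerivAt y (v t) t ∧
        HasDerivAt z ((x t * v t - y t * u t) / 2) t) :
    ∫ t in a..b, (x t - e) * v t
      = (z b + x b * y b / 2 - e * y b) - (z a + x a * y a / 2 - e * y a) := by
  have hx : ContinuousOn x (Icc a b) := fun t ht => (hder t ht).1.continuousAt.continuousWithinAt
  refine integral_eq_sub_of_hasDerivAt (f := fun t => z t + x t * y t / 2 - e * y t)
    (fun t ht => ?_)
    (((hx.sub continuousOn_const).mul hv).intervalIntegrable_of_Icc hab)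
  obtain ⟨hxt, hyt, hzt⟩ := hder t (uIcc_of_le hab ▸ ht)
  exact ((hzt.add ((hxt.mul hyt).div_const 2)).sub (hyt.const_mul e)).congr_deriv (by ring)

theorem four_mul_sqrt_le_integral_of_horizontal (hx0 : x 0 = 0) (hy0 : y 0 = 0) (hz0 : z 0 = 0)
    (hu : ContinuousOn u (Icc 0 1)) (hv : ContinuousOn v (Icc 0 1))
    (hder : ∀ t ∈ Icc (0:ℝ) 1, HasDerivAt x (u t) t ∧ HasDerivAt y (v t) t ∧
        HasDerivAt z ((x t * v t - y t * u t) / 2) t) :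
    4 * √(|z 1| + |x 1 * y 1| / 2) - |x 1| - |y 1| ≤ ∫ t in (0:ℝ)..1, (|u t| + |v t|) := by
  set X := ∫ t in (0:ℝ)..1, |u t|
  set Y := ∫ t in (0:ℝ)..1, |v t|
  have hX : 0 ≤ X := integral_nonneg zero_le_one fun t _ => abs_nonneg _
  have hY : 0 ≤ Y := integral_nonneg zero_le_one fun t _ => abs_nonneg _
  have hx : ContinuousOn x (Icc 0 1) := fun t ht => (hder t ht).1.continuousAt.continuousWithinAt
  obtain ⟨c, hc⟩ := exists_forall_abs_sub_le_integral_abs_deriv zero_le_one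
    (fun t ht => (hder t ht).1) hu
  rw [hx0, sub_zero] at hc
  have hv1 : ∫ t in (0:ℝ)..1, v t = y 1 := by
    rw [integral_eq_sub_of_hasDerivAt
      (fun t ht => (hder t (by rwa [uIcc_of_le zero_le_one] at ht)).2.1)
      (hv.intervalIntegrable_of_Icc zero_le_one), hy0, sub_zero]
  have harea (s : ℝ) (hs : s ∈ Icc (0:ℝ) 1) :
      |z 1 + x 1 * y 1 / 2 - x s * y 1| ≤ (X + |x 1|) / 4 * (Y + |y 1|) := by
    have := abs_integral_sub_mul_le zero_le_one hx hv hc (by rw [abs_sub_comm]; exact hc s hs)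
    rw [integral_sub_mul_eq_of_horizontal zero_le_one _ hv hder, hv1, hx0, hy0, hz0] at this
    simpa only [mul_zero, zero_div, add_zero, sub_zero] using this
  have hbound : |z 1| + |x 1 * y 1| / 2 ≤ ((X + |x 1| + (Y + |y 1|)) / 4) ^ 2 := by
    have h₀ := harea 0 (left_mem_Icc.mpr zero_le_one)
    have h₁ := harea 1 (right_mem_Icc.mpr zero_le_one)
    rw [hx0, zero_mul, sub_zero] at h₀
    rw [show z 1 + x 1 * y 1 / 2 - x 1 * y 1 = z 1 - x 1 * y 1 / 2 by ring] at h₁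
    calc _ = |z 1| + |x 1 * y 1 / 2| := by rw [abs_div, abs_two]
      _ ≤ (X + |x 1|) / 4 * (Y + |y 1|) := abs_add_abs_le_of_abs_add_le_of_abs_sub_le h₀ h₁
      _ ≤ _ := by nlinarith [sq_nonneg (X + |x 1| - (Y + |y 1|))]
  have hsqrt := Real.sqrt_le_sqrt hbound
  rw [Real.sqrt_sq (by positivity)] at hsqrt
  rw [integral_add (hu.abs.intervalIntegrable_of_Icc zero_le_one)
    (hv.abs.intervalIntegrable_of_Icc zero_le_one)]
  linarith

end Horizontal

section Ramp

open Real

noncomputable def ramp (t : ℝ) : ℝ := (1 - cos (π * t)) / 2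

noncomputable def ramp' (t : ℝ) : ℝ := π * sin (π * t) / 2

theorem hasDerivAt_ramp (t : ℝ) : HasDerivAt ramp (ramp' t) t := by
  have := (((hasDerivAt_id' t).const_mul π).cos.const_sub 1).div_const 2
  exact this.congr_deriv (by simp only [ramp']; ring)

theorem continuous_ramp' : Continuous ramp' := by
  unfold ramp'; fun_prop

@[simp] theorem ramp_zero : ramp 0 = 0 := by simp [ramp]

@[simp] theorem ramp_one : ramp 1 = 1 := by norm_num [ramp]

@[simp] theorem ramp'_zero : ramp' 0 = 0 := by simp [ramp']

@[simp] theorem ramp'_one : ramp' 1 = 0 := by simp [ramp']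

theorem integral_abs_ramp' : ∫ t in (0:ℝ)..1, |ramp' t| = 1 := by
  have hnonneg : EqOn (fun t => |ramp' t|) ramp' (uIcc 0 1) := fun t ht => by
    rw [uIcc_of_le zero_le_one] at ht
    refine abs_of_nonneg (div_nonneg (mul_nonneg pi_pos.le (sin_nonneg_of_nonneg_of_le_pi ?_ ?_))
      zero_le_two) <;> nlinarith [pi_pos, ht.1, ht.2]
  rw [integral_congr hnonneg, integral_eq_sub_of_hasDerivAt (fun t _ => hasDerivAt_ramp t)
    (continuous_ramp'.intervalIntegrable 0 1)]
  simp

end Ramp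

theorem hasDerivAt_ite_le {F G F' G' : ℝ → ℝ} {a : ℝ} (hF : ∀ t, HasDerivAt F (F' t) t)
    (hG : ∀ t, HasDerivAt G (G' t) t) (h : F a = G a) (h' : F' a = G' a) (t : ℝ) :
    HasDerivAt (fun s => if s ≤ a then F s else G s) (if t ≤ a then F' t else G' t) t := by
  rcases lt_trichotomy t a with ht | rfl | ht
  · rw [if_pos ht.le]
    refine (hF t).congr_of_eventuallyEq ?_
    filter_upwards [Iio_mem_nhds ht] with s hs using if_pos (le_of_lt hs)
  · rw [if_pos le_rfl]
    have hleft : HasDerivWithinAt (fun s => if s ≤ t then F s else G s) (F' t) (Iic t) t :=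
      (hF t).hasDerivWithinAt.congr (fun s hs => if_pos hs) (if_pos le_rfl)
    have hright : HasDerivWithinAt (fun s => if s ≤ t then F s else G s) (F' t) (Ici t) t := by
      refine h' ▸ (hG t).hasDerivWithinAt.congr (fun s hs => ?_) (by simp [h])
      rcases eq_or_lt_of_le (show t ≤ s from hs) with rfl | hs
      · simp [h]
      · exact if_neg (not_le.mpr hs)
    simpa [Iic_union_Ici] using hleft.union hright
  · rw [if_neg (not_le.mpr ht)]
    refine (hG t).congr_of_eventuallyEq ?_
    filter_upwards [Ioi_mem_nhds ht] with s hs using if_neg (not_le.mpr hs)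

section Concat

noncomputable def concat (f g : ℝ → ℝ) (t : ℝ) : ℝ := if t ≤ 1 / 2 then f (2 * t) else g (2 * t - 1)

variable {f g f' g' : ℝ → ℝ}

@[simp] theorem concat_zero : concat f g 0 = f 0 := by norm_num [concat]

@[simp] theorem concat_one : concat f g 1 = g 1 := by norm_num [concat]

theorem continuous_concat (hf : Continuous f) (hg : Continuous g) (h : f 1 = g 0) :
    Continuous (concat f g) :=
  Continuous.if_le (hf.comp (continuous_const_mul 2))
    (hg.comp ((continuous_const_mul 2).sub continuous_const)) continuous_id continuous_const
    fun t ht => by norm_num [ht, h]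

theorem hasDerivAt_concat (hf : ∀ t, HasDerivAt f (f' t) t) (hg : ∀ t, HasDerivAt g (g' t) t)
    (h : f 1 = g 0) (h' : f' 1 = g' 0) (t : ℝ) :
    HasDerivAt (concat f g) (concat (fun s => 2 * f' s) (fun s => 2 * g' s) t) t := by
  have hf2 (t : ℝ) : HasDerivAt (fun s => f (2 * s)) (2 * f' (2 * t)) t :=
    ((hf (2 * t)).comp t ((hasDerivAt_id' t).const_mul 2)).congr_deriv (by ring)
  have hg2 (t : ℝ) : HasDerivAt (fun s => g (2 * s - 1)) (2 * g' (2 * t - 1)) t :=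
    ((hg (2 * t - 1)).comp t (((hasDerivAt_id' t).const_mul 2).sub_const 1)).congr_deriv (by ring)
  exact hasDerivAt_ite_le hf2 hg2 (by norm_num [h]) (by norm_num [h']) t

theorem integral_concat (hf : Continuous f) (hg : Continuous g) (h : f 1 = g 0) :
    ∫ t in (0:ℝ)..1, concat f g t = ((∫ t in (0:ℝ)..1, f t) + ∫ t in (0:ℝ)..1, g t) / 2 := by
  have hc := (continuous_concat hf hg h).intervalIntegrable (μ := volume)
  have hleft : EqOn (concat f g) (fun t => f (2 * t)) (uIcc 0 (1 / 2)) := fun t ht => by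
    rw [uIcc_of_le (by norm_num)] at ht
    exact if_pos ht.2
  have hright : EqOn (concat f g) (fun t => g (2 * t - 1)) (uIcc (1 / 2) 1) := fun t ht => by
    rw [uIcc_of_le (by norm_num)] at ht
    rcases eq_or_lt_of_le ht.1 with rfl | hlt
    · norm_num [concat, h]
    · exact if_neg (not_le.mpr hlt)
  rw [← integral_add_adjacent_intervals (hc 0 (1 / 2)) (hc (1 / 2) 1), integral_congr hleft,
    integral_congr hright, integral_comp_mul_left _ two_ne_zero,
    integral_comp_mul_sub _ two_ne_zero]
  norm_num
  ring

end Concat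

/-- Horizontal paths on all of `ℝ` with controls vanishing at `0` and `1`, so that concatenations
stay `C¹`. -/
structure HorizontalPath where
  (x y z u v : ℝ → ℝ)
  x_zero : x 0 = 0
  y_zero : y 0 = 0
  z_zero : z 0 = 0
  continuous_u : Continuous u
  continuous_v : Continuous v
  hasDerivAt_x : ∀ t, HasDerivAt x (u t) t
  hasDerivAt_y : ∀ t, HasDerivAt y (v t) t
  hasDerivAt_z : ∀ t, HasDerivAt z ((x t * v t - y t * u t) / 2) t
  u_zero : u 0 = 0
  v_zero : v 0 = 0
  u_one : u 1 = 0
  v_one : v 1 = 0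

namespace HorizontalPath

noncomputable def length (γ : HorizontalPath) : ℝ := ∫ t in (0:ℝ)..1, (|γ.u t| + |γ.v t|)

def endpoint (γ : HorizontalPath) : ℝ × ℝ × ℝ := (γ.x 1, γ.y 1, γ.z 1)

theorem length_mem_horizontalLengths (γ : HorizontalPath) :
    γ.length ∈ horizontalLengths γ.endpoint :=
  ⟨γ.x, γ.y, γ.z, γ.u, γ.v, γ.x_zero, γ.y_zero, γ.z_zero, rfl, rfl, rfl,
    γ.continuous_u.continuousOn, γ.continuous_v.continuousOn,
    fun t _ => ⟨γ.hasDerivAt_x t, γ.hasDerivAt_y t, γ.hasDerivAt_z t⟩, rfl⟩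

noncomputable def segment (a b : ℝ) : HorizontalPath where
  x t := a * ramp t
  y t := b * ramp t
  z _ := 0
  u t := a * ramp' t
  v t := b * ramp' t
  x_zero := by simp
  y_zero := by simp
  z_zero := rfl
  continuous_u := continuous_const.mul continuous_ramp'
  continuous_v := continuous_const.mul continuous_ramp'
  hasDerivAt_x t := (hasDerivAt_ramp t).const_mul a
  hasDerivAt_y t := (hasDerivAt_ramp t).const_mul b
  hasDerivAt_z t := (hasDerivAt_const t 0).congr_deriv (by ring)
  u_zero := by simp
  v_zero := by simp
  u_one := by simp
  v_one := by simp

@[simp] theorem endpoint_segment (a b : ℝ) : (segment a b).endpoint = (a, b, 0) := by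
  simp [endpoint, segment]

@[simp] theorem length_segment (a b : ℝ) : (segment a b).length = |a| + |b| := by
  have h : (fun t => |a * ramp' t| + |b * ramp' t|) = fun t => (|a| + |b|) * |ramp' t| := by
    ext t; rw [abs_mul, abs_mul]; ring
  simp only [length, segment]
  rw [h, intervalIntegral.integral_const_mul, integral_abs_ramp', mul_one]

/-- `γ` followed by the left translate of `δ` by `γ.endpoint`. -/
noncomputable def trans (γ δ : HorizontalPath) : HorizontalPath where
  x := concat γ.x fun s => γ.x 1 + δ.x s
  y := concat γ.y fun s => γ.y 1 + δ.y s
  z := concat γ.z fun s => γ.z 1 + δ.z s + (γ.x 1 * δ.y s - γ.y 1 * δ.x s) / 2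
  u := concat (fun s => 2 * γ.u s) fun s => 2 * δ.u s
  v := concat (fun s => 2 * γ.v s) fun s => 2 * δ.v s
  x_zero := by simp [γ.x_zero]
  y_zero := by simp [γ.y_zero]
  z_zero := by simp [γ.z_zero]
  continuous_u := continuous_concat (continuous_const.mul γ.continuous_u)
    (continuous_const.mul δ.continuous_u) (by simp [γ.u_one, δ.u_zero])
  continuous_v := continuous_concat (continuous_const.mul γ.continuous_v)
    (continuous_const.mul δ.continuous_v) (by simp [γ.v_one, δ.v_zero])
  hasDerivAt_x := hasDerivAt_concat γ.hasDerivAt_x (fun s => (δ.hasDerivAt_x s).const_add _)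
    (by simp [δ.x_zero]) (by simp [γ.u_one, δ.u_zero])
  hasDerivAt_y := hasDerivAt_concat γ.hasDerivAt_y (fun s => (δ.hasDerivAt_y s).const_add _)
    (by simp [δ.y_zero]) (by simp [γ.v_one, δ.v_zero])
  hasDerivAt_z t := by
    have hδ (s : ℝ) := ((δ.hasDerivAt_z s).const_add (γ.z 1)).add
      ((((δ.hasDerivAt_y s).const_mul (γ.x 1)).sub
        ((δ.hasDerivAt_x s).const_mul (γ.y 1))).div_const 2)
    refine (hasDerivAt_concat γ.hasDerivAt_z hδ (by simp [δ.x_zero, δ.y_zero, δ.z_zero])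
      (by simp [γ.u_one, γ.v_one, δ.u_zero, δ.v_zero]) t).congr_deriv ?_
    simp only [concat]
    split_ifs <;> ring
  u_zero := by simp [γ.u_zero]
  v_zero := by simp [γ.v_zero]
  u_one := by simp [δ.u_one]
  v_one := by simp [δ.v_one]

@[simp] theorem endpoint_trans (γ δ : HorizontalPath) :
    (γ.trans δ).endpoint = hMul γ.endpoint δ.endpoint := by
  simp [endpoint, trans, hMul]

@[simp] theorem length_trans (γ δ : HorizontalPath) :
    (γ.trans δ).length = γ.length + δ.length := by
  have hcont (η : HorizontalPath) : Continuous fun s => 2 * (|η.u s| + |η.v s|) :=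
    continuous_const.mul (η.continuous_u.abs.add η.continuous_v.abs)
  have h : (fun t => |(γ.trans δ).u t| + |(γ.trans δ).v t|)
      = concat (fun s => 2 * (|γ.u s| + |γ.v s|)) fun s => 2 * (|δ.u s| + |δ.v s|) := by
    ext t
    simp only [trans, concat]
    split_ifs <;> simp only [abs_mul, abs_two] <;> ring
  rw [length, h,
    integral_concat (hcont γ) (hcont δ) (by simp [γ.u_one, γ.v_one, δ.u_zero, δ.v_zero]),
    intervalIntegral.integral_const_mul, intervalIntegral.integral_const_mul, length, length]
  ring

end HorizontalPath

open HorizontalPath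

theorem le_of_mem_horizontalLengths {x y z L : ℝ} (hL : L ∈ horizontalLengths (x, y, z)) :
    4 * √(|z| + |x * y| / 2) - |x| - |y| ≤ L := by
  obtain ⟨x, y, z, u, v, hx0, hy0, hz0, rfl, rfl, rfl, hu, hv, hder, rfl⟩ := hL
  exact four_mul_sqrt_le_integral_of_horizontal hx0 hy0 hz0 hu hv hder

theorem exists_abs_eq_one_and_eq_mul_abs (x : ℝ) : ∃ ε : ℝ, |ε| = 1 ∧ x = ε * |x| := by
  rcases le_total 0 x with hx | hx
  · exact ⟨1, abs_one, by rw [abs_of_nonneg hx, one_mul]⟩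
  · exact ⟨-1, by simp, by rw [abs_of_nonpos hx]; ring⟩

theorem abs_sub_mul_eq_sub_abs {x ε s : ℝ} (hε : |ε| = 1) (hx : x = ε * |x|) (hs : |x| ≤ s) :
    |x - ε * s| = s - |x| := by
  rw [show x - ε * s = ε * (|x| - s) by rw [mul_sub, ← hx], abs_mul, hε, one_mul,
    abs_of_nonpos (sub_nonpos.mpr hs), neg_sub]

theorem exists_horizontalPath_four_sided {x y z s : ℝ} (hs : s ^ 2 = |z| + |x * y| / 2)
    (hxs : |x| ≤ s) (hys : |y| ≤ s) :
    ∃ γ : HorizontalPath, γ.endpoint = (x, y, z) ∧ γ.length = 4 * s - |x| - |y| := by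
  obtain ⟨εx, hεx, hx⟩ := exists_abs_eq_one_and_eq_mul_abs x
  obtain ⟨εy, hεy, hy⟩ := exists_abs_eq_one_and_eq_mul_abs y
  have hε : (εx * εy) ^ 2 = 1 := by rw [← sq_abs, abs_mul, hεx, hεy]; norm_num
  have hxy : x * y = εx * εy * |x * y| := by
    rw [abs_mul]; linear_combination εy * |y| * hx + x * hy
  have hlen : |y - εy * s| + |εx * s| + |εy * s| + |x - εx * s| = 4 * s - |x| - |y| := by
    rw [abs_sub_mul_eq_sub_abs hεy hy hys, abs_sub_mul_eq_sub_abs hεx hx hxs, abs_mul, abs_mul,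
      hεx, hεy, abs_of_nonneg ((abs_nonneg x).trans hxs)]
    ring
  have hzε : |εx * εy * z| = |z| := by rw [abs_mul, abs_mul, hεx, hεy, one_mul, one_mul]
  -- Traversing the same four sides in the opposite order reverses the sign of the enclosed area.
  rcases le_total 0 (εx * εy * z) with hz | hz
  · refine ⟨(segment 0 (y - εy * s)).trans ((segment (εx * s) 0).trans
      ((segment 0 (εy * s)).trans (segment (x - εx * s) 0))), ?_, ?_⟩
    · rw [abs_of_nonneg hz] at hzε
      simp only [endpoint_trans, endpoint_segment, hMul, Prod.mk.injEq]
      refine ⟨by ring, by ring, ?_⟩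
      linear_combination (εx * εy) * hs - (εx * εy) * hzε + z * hε - 1 / 2 * hxy
    · simp only [length_trans, length_segment, abs_zero, zero_add, add_zero, ← hlen]
      ring
  · refine ⟨(segment (x - εx * s) 0).trans ((segment 0 (εy * s)).trans
      ((segment (εx * s) 0).trans (segment 0 (y - εy * s)))), ?_, ?_⟩
    · rw [abs_of_nonpos hz] at hzε
      simp only [endpoint_trans, endpoint_segment, hMul, Prod.mk.injEq]
      refine ⟨by ring, by ring, ?_⟩
      linear_combination -(εx * εy) * hs + (εx * εy) * hzε + z * hε + 1 / 2 * hxy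
    · simp only [length_trans, length_segment, abs_zero, zero_add, add_zero, ← hlen]
      ring

theorem mem_horizontalLengths_of_sq_le {x y z : ℝ} (h : max |x| |y| ^ 2 - |x * y| / 2 ≤ |z|) :
    4 * √(|z| + |x * y| / 2) - |x| - |y| ∈ horizontalLengths (x, y, z) := by
  have hsq (w : ℝ) (hw : |w| ≤ max |x| |y|) : w ^ 2 ≤ |z| + |x * y| / 2 := by
    nlinarith [pow_le_pow_left₀ (abs_nonneg w) hw 2, sq_abs w]
  obtain ⟨γ, hγ, hlen⟩ := exists_horizontalPath_four_sided (Real.sq_sqrt (by positivity))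
    (Real.abs_le_sqrt (hsq x (le_max_left _ _))) (Real.abs_le_sqrt (hsq y (le_max_right _ _)))
  exact hγ ▸ hlen ▸ γ.length_mem_horizontalLengths

/-- In the region `max{|x|,|y|}² − |xy|/2 ≤ |z|`, the subFinsler distance from
the identity in the Heisenberg group is `4√(|z| + |xy|/2) − |x| − |y|`. -/
theorem d3_eq_of_four_sided (x y z : ℝ)
    (h : max |x| |y| ^ 2 - |x * y| / 2 ≤ |z|) :
    d3 (x, y, z) = 4 * Real.sqrt (|z| + |x * y| / 2) - |x| - |y| :=
  d3_eq_sInf_horizontalLengths _ ▸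
    IsLeast.csInf_eq ⟨mem_horizontalLengths_of_sq_le h, fun _ hL => le_of_mem_horizontalLengths hL⟩
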